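/- arXiv:2006.13977 — 2 statements merged into one kernel-verified Lean document; each statement's English description precedes it below -/
import Mathlib

section
/- Let (Ω, 𝒫) be a probability space, let S and T be measurable spaces, and let g : S × T → ℝ be a measurable function taking values in {0,1}. Let X₁, …, Xₙ be i.i.d. S-valued random variables with common law μ, let W₁, …, W_l be i.i.d. T-valued random variables with common law ν, and suppose the whole family (X₁,…,Xₙ, W₁,…,W_l) is jointly independent. Then for every ε > 0, 𝒫( (1/(n·l)) · Σ_{j=1}^{n} Σ_{i=1}^{l} g(X_j, W_i) − ∫_S ∫_T g(x,w) dν(w) dμ(x) ≥ ε ) ≤ (n+1) · exp( − n ε² · l / (√l + √n)² ). -/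
/-!
Put `p x = ∫ g (x, ·) dν` and `m = ∫ p dμ`, and split `ε = ε₁ + ε₂` in the ratio `√l : √n`, so
that `n ε₁² = l ε₂² = n ε² l / (√l + √n)²`. If the double average exceeds `m + ε`, then either
`∑ⱼ p (Xⱼ) ≥ n (m + ε₁)`, or `∑ᵢ g (Xⱼ, Wᵢ) ≥ l (p (Xⱼ) + ε₂)` for some `j`. The first event is
controlled by Hoeffding's inequality for the i.i.d. `[0,1]`-valued `p (Xⱼ)`; for the others,
conditionally on `Xⱼ = x` (Fubini on the joint law `μ^⊗n ⊗ ν^⊗l`), the `g (x, Wᵢ)` are i.i.d. with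
mean `p x`, and Hoeffding applies again. A union bound over these `n + 1` events concludes; in fact
Hoeffding gives the bound with the exponent doubled.
-/

open MeasureTheory ProbabilityTheory

universe u

-- The family `(X₁, …, Xₙ, W₁, …, W_l)` is indexed by `ι ⊕ κ`, `S`-valued on the left block and
-- `T`-valued on the right, so that its joint independence is a single `iIndepFun`.
def sumType (S T : Type u) {ι κ : Type*} : ι ⊕ κ → Type u
  | .inl _ => S
  | .inr _ => T

def sumMS {S T : Type u} {ι κ : Type*} (mS : MeasurableSpace S) (mT : MeasurableSpace T) :
    ∀ k : ι ⊕ κ, MeasurableSpace (sumType S T k)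
  | .inl _ => mS
  | .inr _ => mT

def sumFun {Ω : Type*} {S T : Type u} {ι κ : Type*} (X : ι → Ω → S) (W : κ → Ω → T) :
    ∀ k : ι ⊕ κ, Ω → sumType S T k
  | .inl j => X j
  | .inr i => W i

open Real

theorem integral_mem_Icc_zero_one {α : Type*} [MeasurableSpace α] {ρ : Measure α}
    [IsProbabilityMeasure ρ] {f : α → ℝ} (hf01 : ∀ a, f a ∈ Set.Icc 0 1) :
    ∫ a, f a ∂ρ ∈ Set.Icc 0 1 := by
  refine ⟨integral_nonneg fun a => (hf01 a).1, (le_abs_self _).trans ?_⟩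
  simpa using norm_integral_le_of_norm_le_const (μ := ρ) (f := f) (C := 1)
    (ae_of_all _ fun a => abs_le.2 ⟨by linarith [(hf01 a).1], (hf01 a).2⟩)

theorem average_sub_lt_of_sum_lt_of_forall_sum_lt {n l : ℕ} (hn : 0 < n) (hl : 0 < l)
    {a : Fin n → Fin l → ℝ} {b : Fin n → ℝ} {m s t : ℝ} (hb : ∑ j, b j < n * (m + s))
    (ha : ∀ j, ∑ i, a j i < l * (b j + t)) :
    1 / ((n : ℝ) * l) * ∑ j, ∑ i, a j i - m < s + t := by
  have hn' : (0 : ℝ) < n := by exact_mod_cast hn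
  have hl' : (0 : ℝ) < l := by exact_mod_cast hl
  have hsum : ∑ j, ∑ i, a j i < n * l * (m + s + t) :=
    calc ∑ j, ∑ i, a j i < ∑ j, l * (b j + t) :=
          Finset.sum_lt_sum_of_nonempty ⟨⟨0, hn⟩, Finset.mem_univ _⟩ fun j _ => ha j
      _ = l * ∑ j, b j + n * l * t := by
          simp only [mul_add, Finset.sum_add_distrib, ← Finset.mul_sum, Finset.sum_const,
            Finset.card_univ, Fintype.card_fin, nsmul_eq_mul]
          ring
      _ < n * l * (m + s + t) := by nlinarith
  rw [sub_lt_iff_lt_add, one_div, inv_mul_lt_iff₀ (by positivity)]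
  linarith

theorem exists_add_eq_and_mul_sq_eq {a b ε : ℝ} (ha : 0 < a) (hb : 0 < b) (hε : 0 ≤ ε) :
    ∃ ε₁ ε₂ : ℝ, 0 ≤ ε₁ ∧ 0 ≤ ε₂ ∧ ε₁ + ε₂ = ε ∧
      a * ε₁ ^ 2 = a * ε ^ 2 * b / (√b + √a) ^ 2 ∧ b * ε₂ ^ 2 = a * ε ^ 2 * b / (√b + √a) ^ 2 := by
  have hsa := sqrt_pos.2 ha
  have hsb := sqrt_pos.2 hb
  refine ⟨ε * √b / (√b + √a), ε * √a / (√b + √a), by positivity, by positivity, ?_, ?_, ?_⟩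
  · field_simp
  · rw [div_pow, mul_pow, sq_sqrt hb.le]
    ring
  · rw [div_pow, mul_pow, sq_sqrt ha.le]
    ring

theorem MeasureTheory.Measure.prod_apply_le_of_forall_measure_preimage_prodMk_le {α β : Type*}
    [MeasurableSpace α] [MeasurableSpace β] (μ : Measure α) [IsProbabilityMeasure μ]
    (ν : Measure β) [SFinite ν] {s : Set (α × β)} (hs : MeasurableSet s) {c : ENNReal}
    (h : ∀ x, ν (Prod.mk x ⁻¹' s) ≤ c) : μ.prod ν s ≤ c := by
  rw [Measure.prod_apply hs]
  exact (lintegral_mono h).trans_eq (by simp)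

theorem measure_pi_sum_ge_le {α ι : Type*} [MeasurableSpace α] [Fintype ι] (ρ : Measure α)
    [IsProbabilityMeasure ρ] {f : α → ℝ} (hf : Measurable f) (hf01 : ∀ a, f a ∈ Set.Icc 0 1)
    {t : ℝ} (ht : 0 ≤ t) :
    Measure.pi (fun _ : ι => ρ) {w | Fintype.card ι * (∫ a, f a ∂ρ + t) ≤ ∑ i, f (w i)}
      ≤ ENNReal.ofReal (exp (-(2 * Fintype.card ι * t ^ 2))) := by
  set m := ∫ a, f a ∂ρ
  have hindep : iIndepFun (fun i (w : ι → α) => f (w i) - m) (Measure.pi fun _ => ρ) :=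
    iIndepFun_pi fun _ => (hf.sub_const m).aemeasurable
  have hsubG (i : ι) : HasSubgaussianMGF (fun w : ι → α => f (w i) - m)
      ((‖(1 : ℝ) - 0‖₊ / 2) ^ 2) (Measure.pi fun _ => ρ) := by
    have hmean : ∫ w, f (w i) ∂(Measure.pi fun _ => ρ) = m := by
      rw [← integral_map (measurable_pi_apply i).aemeasurable hf.aestronglyMeasurable,
        (measurePreserving_eval _ i).map_eq]
    simpa [hmean] using hasSubgaussianMGF_of_mem_Icc (μ := Measure.pi fun _ => ρ)
      (hf.comp (measurable_pi_apply i)).aemeasurable (ae_of_all _ fun w => hf01 (w i))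
  have hoeffding := HasSubgaussianMGF.measure_sum_ge_le_of_iIndepFun hindep
    (s := Finset.univ) (fun i _ => hsubG i) (mul_nonneg (Fintype.card ι).cast_nonneg ht)
  have hset : {w : ι → α | Fintype.card ι * (m + t) ≤ ∑ i, f (w i)}
      = {w | Fintype.card ι * t ≤ ∑ i, (f (w i) - m)} := by
    ext w
    simp only [Set.mem_ofPred_eq, Finset.sum_sub_distrib, Finset.sum_const, Finset.card_univ,
      nsmul_eq_mul]
    constructor <;> intro h <;> linarith
  rw [hset, ← ofReal_measureReal]
  refine ENNReal.ofReal_le_ofReal (hoeffding.trans_eq ?_)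
  rcases (Fintype.card ι).eq_zero_or_pos with hk | hk
  · simp [hk]
  · congr 1
    simp only [sub_zero, nnnorm_one, one_div, inv_pow, Finset.sum_const, Finset.card_univ,
      nsmul_eq_mul, NNReal.coe_mul, NNReal.coe_natCast, NNReal.coe_inv, NNReal.coe_pow,
      NNReal.coe_ofNat]
    field_simp

theorem ProbabilityTheory.iIndepFun.map_prodMk_eq_pi_prod_pi {Ω ι κ : Type*} {S T : Type u}
    [MeasurableSpace Ω] {P : Measure Ω} [Fintype ι] [Fintype κ]
    [mS : MeasurableSpace S] [mT : MeasurableSpace T] {μ : Measure S} {ν : Measure T}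
    {X : ι → Ω → S} {W : κ → Ω → T} (hXm : ∀ j, Measurable (X j))
    (hWm : ∀ i, Measurable (W i)) (hXlaw : ∀ j, P.map (X j) = μ) (hWlaw : ∀ i, P.map (W i) = ν)
    (hindep : iIndepFun (m := sumMS mS mT) (sumFun X W) P) :
    P.map (fun ω => (fun j => X j ω, fun i => W i ω))
      = (Measure.pi fun _ : ι => μ).prod (Measure.pi fun _ : κ => ν) := by
  let := sumMS (ι := ι) (κ := κ) mS mT
  have := hindep.isProbabilityMeasure
  have hm : ∀ k, Measurable (sumFun X W k) := by
    rintro (j | i)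
    exacts [hXm j, hWm i]
  have := fun k => Measure.isProbabilityMeasure_map (μ := P) (hm k).aemeasurable
  have hmarg := measurePreserving_sumPiEquivProdPi fun k => P.map (sumFun X W k)
  have hcomp := Measure.map_map (μ := P) (MeasurableEquiv.sumPiEquivProdPi _).measurable
    (measurable_pi_lambda _ hm)
  rw [hindep.map_fun_eq_pi_map fun k => (hm k).aemeasurable, hmarg.map_eq] at hcomp
  refine hcomp.symm.trans ?_
  congr 1
  · exact congrArg Measure.pi (funext hXlaw)
  · exact congrArg Measure.pi (funext hWlaw)

theorem measure_pi_prod_pi_average_sub_integral_ge_le {S T : Type*} [MeasurableSpace S]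
    [MeasurableSpace T] (μ : Measure S) (ν : Measure T) [IsProbabilityMeasure μ]
    [IsProbabilityMeasure ν] {g : S × T → ℝ} (hg : Measurable g)
    (hg01 : ∀ p, g p ∈ Set.Icc 0 1) {n l : ℕ} (hn : 0 < n) (hl : 0 < l) {ε : ℝ} (hε : 0 ≤ ε) :
    ((Measure.pi fun _ : Fin n => μ).prod (Measure.pi fun _ : Fin l => ν))
        {q | (1 / ((n : ℝ) * l)) * ∑ j, ∑ i, g (q.1 j, q.2 i) - ∫ x, ∫ w, g (x, w) ∂ν ∂μ ≥ ε}
      ≤ ENNReal.ofReal ((n + 1) * exp (-(2 * (n * ε ^ 2 * l / (√l + √n) ^ 2)))) := by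
  set P := (Measure.pi fun _ : Fin n => μ).prod (Measure.pi fun _ : Fin l => ν)
  set p : S → ℝ := fun x => ∫ w, g (x, w) ∂ν
  have hp : Measurable p := hg.stronglyMeasurable.integral_prod_right'.measurable
  have hp01 (x : S) : p x ∈ Set.Icc 0 1 := integral_mem_Icc_zero_one fun w => hg01 (x, w)
  set m := ∫ x, p x ∂μ
  obtain ⟨ε₁, ε₂, hε₁, hε₂, hsplit, hA₁, hA₂⟩ :=
    exists_add_eq_and_mul_sq_eq (a := n) (b := l) (by positivity) (by positivity) hε
  set EA := {q : (Fin n → S) × (Fin l → T) | n * (m + ε₁) ≤ ∑ j, p (q.1 j)}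
  set EB := fun j : Fin n =>
    {q : (Fin n → S) × (Fin l → T) | l * (p (q.1 j) + ε₂) ≤ ∑ i, g (q.1 j, q.2 i)}
  have hEA : P EA ≤ ENNReal.ofReal (exp (-(2 * n * ε₁ ^ 2))) := by
    have : EA = {x : Fin n → S | n * (m + ε₁) ≤ ∑ j, p (x j)} ×ˢ Set.univ := by
      ext; simp [EA]
    rw [this, Measure.prod_prod, measure_univ, mul_one]
    have := measure_pi_sum_ge_le (ι := Fin n) μ hp hp01 hε₁
    rwa [Fintype.card_fin] at this
  have hEB (j : Fin n) : P (EB j) ≤ ENNReal.ofReal (exp (-(2 * l * ε₂ ^ 2))) := by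
    refine Measure.prod_apply_le_of_forall_measure_preimage_prodMk_le _ _
      (measurableSet_le (by fun_prop) (by fun_prop)) fun x => ?_
    have := measure_pi_sum_ge_le (ι := Fin l) ν (hg.comp measurable_prodMk_left)
      (fun w => hg01 (x j, w)) hε₂
    rwa [Fintype.card_fin] at this
  have hcover : {q : (Fin n → S) × (Fin l → T) |
      (1 / ((n : ℝ) * l)) * ∑ j, ∑ i, g (q.1 j, q.2 i) - m ≥ ε} ⊆ EA ∪ ⋃ j, EB j := by
    intro q hq
    by_contra hcon
    simp only [Set.mem_union, Set.mem_iUnion, not_or, not_exists, EA, EB, Set.mem_ofPred_eq,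
      not_le] at hcon
    exact hq.not_gt (hsplit ▸ average_sub_lt_of_sum_lt_of_forall_sum_lt hn hl hcon.1 hcon.2)
  calc _ ≤ P EA + P (⋃ j, EB j) := (measure_mono hcover).trans (measure_union_le _ _)
    _ ≤ P EA + ∑ j, P (EB j) := by grw [measure_iUnion_fintype_le]
    _ ≤ ENNReal.ofReal (exp (-(2 * n * ε₁ ^ 2)))
          + ∑ _j : Fin n, ENNReal.ofReal (exp (-(2 * l * ε₂ ^ 2))) :=
        add_le_add hEA (Finset.sum_le_sum fun j _ => hEB j)
    _ = _ := by
        rw [mul_assoc 2 (n : ℝ), mul_assoc 2 (l : ℝ), hA₁, hA₂, Finset.sum_const,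
          Finset.card_univ, Fintype.card_fin, nsmul_eq_mul, ENNReal.ofReal_mul (by positivity),
          ENNReal.ofReal_add (by positivity) zero_le_one, ENNReal.ofReal_natCast,
          ENNReal.ofReal_one]
        ring

/-- **Proposition 1 (main bound).** If `X₁, …, Xₙ` are i.i.d. with law `μ`, `W₁, …, W_l` are
i.i.d. with law `ν`, the whole family is jointly independent, and `g` is a measurable `{0,1}`-valued
function, then the probability that the empirical double average exceeds the expected value
`∫∫ g dν dμ` by at least `ε` is at most `(n+1)·exp(−nε²·l/(√l+√n)²)`. -/
theorem stmt0 {Ω : Type*} {S T : Type u} [MeasureSpace Ω]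
    [IsProbabilityMeasure (ℙ : Measure Ω)]
    [mS : MeasurableSpace S] [mT : MeasurableSpace T]
    (μ : Measure S) (ν : Measure T)
    (g : S × T → ℝ) (hg : Measurable g) (hg01 : ∀ p, g p = 0 ∨ g p = 1)
    (n l : ℕ) (hn : 0 < n) (hl : 0 < l)
    (X : Fin n → Ω → S) (W : Fin l → Ω → T)
    (hXm : ∀ j, Measurable (X j)) (hWm : ∀ i, Measurable (W i))
    (hXlaw : ∀ j, Measure.map (X j) ℙ = μ)
    (hWlaw : ∀ i, Measure.map (W i) ℙ = ν)
    (hindep : iIndepFun (m := sumMS mS mT) (sumFun X W) ℙ)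
    (ε : ℝ) (hε : 0 < ε) :
    ℙ {ω | (1 / ((n : ℝ) * l)) * ∑ j : Fin n, ∑ i : Fin l, g (X j ω, W i ω)
        - ∫ x, ∫ w, g (x, w) ∂ν ∂μ ≥ ε}
      ≤ ENNReal.ofReal
          (((n : ℝ) + 1) * Real.exp (-((n : ℝ) * ε ^ 2 * l / (Real.sqrt l + Real.sqrt n) ^ 2))) := by
  have : IsProbabilityMeasure μ :=
    hXlaw ⟨0, hn⟩ ▸ Measure.isProbabilityMeasure_map (hXm _).aemeasurable
  have : IsProbabilityMeasure ν :=
    hWlaw ⟨0, hl⟩ ▸ Measure.isProbabilityMeasure_map (hWm _).aemeasurable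
  have hgIcc (p : S × T) : g p ∈ Set.Icc 0 1 := by rcases hg01 p with h | h <;> simp [h]
  have hlaw := hindep.map_prodMk_eq_pi_prod_pi hXm hWm hXlaw hWlaw
  have hrate : 0 ≤ (n : ℝ) * ε ^ 2 * l / (√l + √n) ^ 2 := by positivity
  calc _ = (ℙ : Measure Ω).map (fun ω => (fun j => X j ω, fun i => W i ω))
        {q | (1 / ((n : ℝ) * l)) * ∑ j, ∑ i, g (q.1 j, q.2 i)
          - ∫ x, ∫ w, g (x, w) ∂ν ∂μ ≥ ε} := by
        rw [Measure.map_apply (by fun_prop) (measurableSet_le (by fun_prop) (by fun_prop))]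
        rfl
    _ ≤ ENNReal.ofReal ((n + 1) * exp (-(2 * (n * ε ^ 2 * l / (√l + √n) ^ 2)))) :=
        hlaw ▸ measure_pi_prod_pi_average_sub_integral_ge_le μ ν hg hgIcc hn hl hε.le
    _ ≤ _ := by gcongr; linarith
end

section
/- Let (Ω, 𝒫) be a probability space, let S and T be measurable spaces, and let g : S × T → ℝ be a measurable function taking values in {0,1}. Let X₁, …, Xₙ be i.i.d. S-valued random variables with common law μ, let W₁, …, W_l be i.i.d. T-valued random variables with common law ν, and suppose the whole family (X₁,…,Xₙ, W₁,…,W_l) is jointly independent. Then for every δ ∈ (0,1), with probability at least 1 − δ, ∫_S ∫_T g(x,w) dν(w) dμ(x) < (1/(n·l)) · Σ_{j=1}^{n} Σ_{i=1}^{l} g(X_j, W_i) + √( log((n+1)/δ) / n ) · (√l + √n)/√l. -/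
/-!
Write `h x = ∫ g(x, w) dν(w)` and `L = log((n+1)/δ)`. The empirical average can fall
`√(L/n) + √(L/l)` below `∫∫ g` only if the average of the `h(X_j)` falls `√(L/n)` below `∫ h dμ`,
or for some `j` the average of the `g(X_j, W_i)` over `i` falls `√(L/l)` below `h(X_j)`.
Hoeffding's inequality bounds each of these `n + 1` events by `exp(-L) = δ/(n+1)`; for the last `n`
it is applied to the sample `W` with `X_j` frozen, which Fubini on the joint law `μⁿ ⊗ νˡ`
justifies.
-/

open MeasureTheory ProbabilityTheory

universe u

theorem sqrt_div_mul_sqrt_add_sqrt_div_sqrt {L n l : ℝ} (hL : 0 ≤ L) (hn : 0 < n) (hl : 0 < l) :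
    √(L / n) * ((√l + √n) / √l) = √(L / n) + √(L / l) := by
  have hsl : 0 < √l := Real.sqrt_pos.2 hl
  rw [mul_div_assoc', div_eq_iff hsl.ne', Real.sqrt_div hL, Real.sqrt_div hL]
  field_simp

theorem exp_neg_two_mul_mul_sqrt_div_sq_le {k L : ℝ} (hk : 0 < k) (hL : 0 ≤ L) :
    Real.exp (-2 * k * √(L / k) ^ 2) ≤ Real.exp (-L) := by
  rw [Real.sq_sqrt (div_nonneg hL hk.le), Real.exp_le_exp]
  field_simp
  linarith

theorem ofReal_add_natCast_mul_ofReal_le {n : ℕ} {a b c : ℝ} (ha : a ≤ c / (n + 1))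
    (hb : b ≤ c / (n + 1)) :
    ENNReal.ofReal a + n * ENNReal.ofReal b ≤ ENNReal.ofReal c := by
  have hn : ENNReal.ofReal ((n : ℝ) + 1) = n + 1 := by
    rw [← Nat.cast_add_one, ENNReal.ofReal_natCast, Nat.cast_add_one]
  calc ENNReal.ofReal a + n * ENNReal.ofReal b
      ≤ ENNReal.ofReal (c / (n + 1)) + n * ENNReal.ofReal (c / (n + 1)) := by gcongr
    _ = ENNReal.ofReal (c / (n + 1)) * ENNReal.ofReal (n + 1) := by rw [hn]; ring
    _ = ENNReal.ofReal c := by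
        rw [← ENNReal.ofReal_mul' (by positivity), div_mul_cancel₀ _ (by positivity)]

theorem ofReal_one_sub_le_measure_compl {Ω : Type*} [MeasurableSpace Ω] {P : Measure Ω}
    [IsProbabilityMeasure P] {s : Set Ω} (hs : MeasurableSet s) {δ : ℝ} (hδ : 0 ≤ δ)
    (hPs : P s ≤ ENNReal.ofReal δ) :
    ENNReal.ofReal (1 - δ) ≤ P sᶜ := by
  rw [prob_compl_eq_one_sub hs, ENNReal.ofReal_sub 1 hδ, ENNReal.ofReal_one]
  exact tsub_le_tsub_left hPs 1

theorem lt_average_add_of_forall_sub_lt {ι κ : Type*} [Fintype ι] [Fintype κ]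
    (a : ι → κ → ℝ) (b : ι → ℝ) {m ε₁ ε₂ : ℝ} (hε₂ : 0 ≤ ε₂)
    (hb : m - (Fintype.card ι : ℝ)⁻¹ * ∑ j, b j < ε₁)
    (ha : ∀ j, b j - (Fintype.card κ : ℝ)⁻¹ * ∑ i, a j i < ε₂) :
    m < 1 / ((Fintype.card ι : ℝ) * Fintype.card κ) * ∑ j, ∑ i, a j i + (ε₁ + ε₂) := by
  have hb_le : (Fintype.card ι : ℝ)⁻¹ * ∑ j, b j
      ≤ 1 / ((Fintype.card ι : ℝ) * Fintype.card κ) * ∑ j, ∑ i, a j i + ε₂ :=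
    calc (Fintype.card ι : ℝ)⁻¹ * ∑ j, b j
        ≤ (Fintype.card ι : ℝ)⁻¹ * ∑ j, ((Fintype.card κ : ℝ)⁻¹ * ∑ i, a j i + ε₂) := by
          gcongr with j
          linarith [ha j]
      _ = 1 / ((Fintype.card ι : ℝ) * Fintype.card κ) * ∑ j, ∑ i, a j i
          + (Fintype.card ι : ℝ)⁻¹ * (Fintype.card ι * ε₂) := by
          rw [Finset.sum_add_distrib, ← Finset.mul_sum, Finset.sum_const, Finset.card_univ,
            nsmul_eq_mul]
          ring
      _ ≤ _ := by
          gcongr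
          rcases eq_or_ne (Fintype.card ι : ℝ) 0 with h | h <;> simp [h, hε₂]
  linarith

theorem measure_pi_integral_sub_average_ge_le {α ι : Type*} [MeasurableSpace α] [Fintype ι]
    (μ : Measure α) [IsProbabilityMeasure μ] {f : α → ℝ} (hf : Measurable f)
    (hf01 : ∀ a, f a ∈ Set.Icc 0 1) {t : ℝ} (ht : 0 ≤ t) :
    (Measure.pi fun _ : ι => μ) {x | t ≤ ∫ a, f a ∂μ - (Fintype.card ι : ℝ)⁻¹ * ∑ i, f (x i)}
      ≤ ENNReal.ofReal (Real.exp (-2 * Fintype.card ι * t ^ 2)) := by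
  rcases isEmpty_or_nonempty ι with hι | hι
  · simpa using prob_le_one
  have hk : (0 : ℝ) < Fintype.card ι := by exact_mod_cast Fintype.card_pos
  set m := ∫ a, f a ∂μ
  have hZ : HasSubgaussianMGF (fun a => m - f a) ((‖(1:ℝ) - 0‖₊ / 2) ^ 2) μ := by
    convert (hasSubgaussianMGF_of_mem_Icc (μ := μ) hf.aemeasurable (ae_of_all _ hf01)).neg using 1
    ext a
    simp [m]
  have hZi (i : ι) : HasSubgaussianMGF (fun x : ι → α => m - f (x i)) ((‖(1:ℝ) - 0‖₊ / 2) ^ 2)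
      (Measure.pi fun _ => μ) := by
    rw [← (measurePreserving_eval (fun _ => μ) i).map_eq] at hZ
    exact HasSubgaussianMGF.of_map (μ := Measure.pi fun _ : ι => μ) (Y := Function.eval i)
      (X := fun a => m - f a) (measurable_pi_apply i).aemeasurable hZ
  have hsum := HasSubgaussianMGF.measure_sum_ge_le_of_iIndepFun
    (iIndepFun_pi (μ := fun _ : ι => μ) (X := fun _ a => m - f a) (fun _ => by fun_prop))
    (s := Finset.univ) (fun i _ => hZi i) (mul_nonneg hk.le ht)
  have hset : {x : ι → α | t ≤ m - (Fintype.card ι : ℝ)⁻¹ * ∑ i, f (x i)}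
      = {x | Fintype.card ι * t ≤ ∑ i, (m - f (x i))} := by
    ext x
    have : ∑ i, (m - f (x i)) = Fintype.card ι * (m - (Fintype.card ι : ℝ)⁻¹ * ∑ i, f (x i)) := by
      rw [Finset.sum_sub_distrib, Finset.sum_const, Finset.card_univ, nsmul_eq_mul]
      field_simp
    rw [Set.mem_ofPred_eq, Set.mem_ofPred_eq, this, mul_le_mul_iff_of_pos_left hk]
  rw [hset, ← ofReal_measureReal]
  refine ENNReal.ofReal_le_ofReal (hsum.trans_eq ?_)
  congr 1
  simp
  field_simp

theorem measure_prod_pi_double_average_add_le_integral_le {S T ι κ : Type*} [MeasurableSpace S]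
    [MeasurableSpace T] [Fintype ι] [Fintype κ] (μ : Measure S) (ν : Measure T)
    [IsProbabilityMeasure μ] [IsProbabilityMeasure ν] {g : S × T → ℝ} (hg : Measurable g)
    (hg01 : ∀ p, g p ∈ Set.Icc 0 1) {ε₁ ε₂ : ℝ} (hε₁ : 0 ≤ ε₁) (hε₂ : 0 ≤ ε₂) :
    ((Measure.pi fun _ : ι => μ).prod (Measure.pi fun _ : κ => ν))
        {v | 1 / ((Fintype.card ι : ℝ) * Fintype.card κ) * ∑ j, ∑ i, g (v.1 j, v.2 i) + (ε₁ + ε₂)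
          ≤ ∫ x, ∫ w, g (x, w) ∂ν ∂μ}
      ≤ ENNReal.ofReal (Real.exp (-2 * Fintype.card ι * ε₁ ^ 2))
        + Fintype.card ι * ENNReal.ofReal (Real.exp (-2 * Fintype.card κ * ε₂ ^ 2)) := by
  set h : S → ℝ := fun x => ∫ w, g (x, w) ∂ν
  have hgx (x : S) : Measurable fun w => g (x, w) := hg.comp measurable_prodMk_left
  have hh : Measurable h := hg.stronglyMeasurable.integral_prod_right'.measurable
  have hh01 (x : S) : h x ∈ Set.Icc 0 1 := by
    refine ⟨integral_nonneg fun w => (hg01 _).1, ?_⟩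
    calc h x ≤ ∫ _, (1 : ℝ) ∂ν :=
          integral_mono (.of_mem_Icc 0 1 (hgx x).aemeasurable (ae_of_all _ fun w => hg01 _))
            (integrable_const 1) fun w => (hg01 _).2
      _ = 1 := by simp
  set B₀ := {x : ι → S | ε₁ ≤ ∫ x, h x ∂μ - (Fintype.card ι : ℝ)⁻¹ * ∑ j, h (x j)}
  set B : ι → Set ((ι → S) × (κ → T)) := fun j =>
    {v | ε₂ ≤ h (v.1 j) - (Fintype.card κ : ℝ)⁻¹ * ∑ i, g (v.1 j, v.2 i)}
  have hsub : {v : (ι → S) × (κ → T) | 1 / ((Fintype.card ι : ℝ) * Fintype.card κ)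
      * ∑ j, ∑ i, g (v.1 j, v.2 i) + (ε₁ + ε₂) ≤ ∫ x, h x ∂μ} ⊆ Prod.fst ⁻¹' B₀ ∪ ⋃ j, B j := by
    intro v hv
    by_contra hvB
    simp only [Set.mem_union, Set.mem_iUnion, not_or, not_exists, Set.mem_preimage, B₀, B,
      Set.mem_ofPred_eq, not_le] at hvB
    exact (lt_average_add_of_forall_sub_lt _ _ hε₂ hvB.1 hvB.2).not_ge hv
  have hB₀ : ((Measure.pi fun _ : ι => μ).prod (Measure.pi fun _ : κ => ν)) (Prod.fst ⁻¹' B₀)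
      ≤ ENNReal.ofReal (Real.exp (-2 * Fintype.card ι * ε₁ ^ 2)) := by
    rw [← Set.prod_univ, Measure.prod_prod, measure_univ, mul_one]
    exact measure_pi_integral_sub_average_ge_le μ hh hh01 hε₁
  have hB (j : ι) : ((Measure.pi fun _ : ι => μ).prod (Measure.pi fun _ : κ => ν)) (B j)
      ≤ ENNReal.ofReal (Real.exp (-2 * Fintype.card κ * ε₂ ^ 2)) := by
    rw [Measure.prod_apply (measurableSet_le measurable_const (by fun_prop))]
    refine (lintegral_mono fun x : ι → S => measure_pi_integral_sub_average_ge_le ν (hgx (x j))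
      (fun w => hg01 _) hε₂).trans_eq ?_
    simp
  calc _ ≤ _ := measure_mono hsub
    _ ≤ _ := measure_union_le _ _
    _ ≤ _ := add_le_add hB₀
        ((measure_iUnion_fintype_le _ _).trans (Finset.sum_le_sum fun j _ => hB j))
    _ = _ := by simp

theorem map_sample_eq_prod_pi {Ω : Type*} {S T : Type u} [MeasurableSpace Ω]
    {P : Measure Ω} [IsProbabilityMeasure P] [mS : MeasurableSpace S] [mT : MeasurableSpace T]
    {μ : Measure S} {ν : Measure T} {ι κ : Type*} [Fintype ι] [Fintype κ]
    {X : ι → Ω → S} {W : κ → Ω → T}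
    (hXm : ∀ j, Measurable (X j)) (hWm : ∀ i, Measurable (W i))
    (hXlaw : ∀ j, P.map (X j) = μ) (hWlaw : ∀ i, P.map (W i) = ν)
    (hindep : iIndepFun (m := sumMS mS mT) (sumFun X W) P) :
    P.map (fun ω => ((fun j => X j ω, fun i => W i ω) : (ι → S) × (κ → T)))
      = (Measure.pi fun _ : ι => μ).prod (Measure.pi fun _ : κ => ν) := by
  let := sumMS (ι := ι) (κ := κ) mS mT
  have hm : ∀ k, Measurable (sumFun X W k) := by
    rintro (j | i)
    exacts [hXm j, hWm i]
  have := (measurePreserving_sumPiEquivProdPi fun k => P.map (sumFun X W k)).map_eq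
  rw [← hindep.map_fun_eq_pi_map fun k => (hm k).aemeasurable,
    Measure.map_map (MeasurableEquiv.measurable _) (measurable_pi_lambda _ hm)] at this
  calc P.map (fun ω => ((fun j => X j ω, fun i => W i ω) : (ι → S) × (κ → T)))
      = (Measure.pi fun j => P.map (X j)).prod (Measure.pi fun i => P.map (W i)) := this
    _ = _ := by simp only [hXlaw, hWlaw]

/-- **Proposition 1 (confidence-interval formulation).** With probability at least `1 − δ`,
the expected value `∫∫ g dν dμ` is strictly below the empirical double average plus the excess term
`√(log((n+1)/δ)/n) · (√l+√n)/√l`. -/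
theorem stmt1 {Ω : Type*} {S T : Type u} [MeasureSpace Ω]
    [IsProbabilityMeasure (ℙ : Measure Ω)]
    [mS : MeasurableSpace S] [mT : MeasurableSpace T]
    (μ : Measure S) (ν : Measure T)
    (g : S × T → ℝ) (hg : Measurable g) (hg01 : ∀ p, g p = 0 ∨ g p = 1)
    (n l : ℕ) (hn : 0 < n) (hl : 0 < l)
    (X : Fin n → Ω → S) (W : Fin l → Ω → T)
    (hXm : ∀ j, Measurable (X j)) (hWm : ∀ i, Measurable (W i))
    (hXlaw : ∀ j, Measure.map (X j) ℙ = μ)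
    (hWlaw : ∀ i, Measure.map (W i) ℙ = ν)
    (hindep : iIndepFun (m := sumMS mS mT) (sumFun X W) ℙ)
    (δ : ℝ) (hδ0 : 0 < δ) (hδ1 : δ < 1) :
    ENNReal.ofReal (1 - δ) ≤
      ℙ {ω | ∫ x, ∫ w, g (x, w) ∂ν ∂μ <
          (1 / ((n : ℝ) * l)) * ∑ j : Fin n, ∑ i : Fin l, g (X j ω, W i ω)
          + Real.sqrt (Real.log (((n : ℝ) + 1) / δ) / n)
              * ((Real.sqrt l + Real.sqrt n) / Real.sqrt l)} := by
  have : IsProbabilityMeasure μ :=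
    hXlaw ⟨0, hn⟩ ▸ Measure.isProbabilityMeasure_map (hXm _).aemeasurable
  have : IsProbabilityMeasure ν :=
    hWlaw ⟨0, hl⟩ ▸ Measure.isProbabilityMeasure_map (hWm _).aemeasurable
  set L := Real.log ((n + 1) / δ)
  have hL : 0 ≤ L := Real.log_nonneg ((one_le_div hδ0).2 (by linarith))
  have htail {k : ℕ} (hk : 0 < k) : Real.exp (-2 * k * √(L / k) ^ 2) ≤ δ / (n + 1) := by
    refine (exp_neg_two_mul_mul_sqrt_div_sq_le (Nat.cast_pos.2 hk) hL).trans_eq ?_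
    rw [Real.exp_neg, Real.exp_log (by positivity), inv_div]
  have hbad := measure_prod_pi_double_average_add_le_integral_le (ι := Fin n) (κ := Fin l) μ ν hg
    (fun p => by rcases hg01 p with h | h <;> simp [h]) (Real.sqrt_nonneg (L / n))
    (Real.sqrt_nonneg (L / l))
  simp only [Fintype.card_fin] at hbad
  have hBad := ofReal_one_sub_le_measure_compl (measurableSet_le (by fun_prop) measurable_const)
    hδ0.le (hbad.trans (ofReal_add_natCast_mul_ofReal_le (htail hn) (htail hl)))
  rw [← map_sample_eq_prod_pi hXm hWm hXlaw hWlaw hindep,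
    Measure.map_apply (by fun_prop) (measurableSet_le (by fun_prop) measurable_const).compl] at hBad
  rw [sqrt_div_mul_sqrt_add_sqrt_div_sqrt hL (Nat.cast_pos.2 hn) (Nat.cast_pos.2 hl)]
  convert hBad using 2
  ext ω
  simp [not_le]
end
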